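/- arXiv:math/0604560 — 2 statements merged into one kernel-verified Lean document; each statement's English description precedes it below -/
import Mathlib

section
/- Let Λ be a ring and consider a commutative diagram of Λ-modules with exact rows: T ↪ B ↠ B/T (canonical inclusion and projection) and S ↪ A ↠ A/S (canonical inclusion and projection), together with maps e₁ : T → B', e₃ : B' → S, e₂ : B/T → A', e₄ : A' → A/S such that e₃ ∘ e₁ realizes a short exact sequence 0 → T → B' → S → 0 and e₄ ∘ e₂ realizes a short exact sequence 0 → B/T → A' → A/S → 0 (i.e., the columns T → B' → S and B/T → A' → A/S are short exact). Let Y = (B ⊕ B')/{(u_T(t), e₁(t)) : t ∈ T} be the pushout of T → B and T → B', and let X = {(a, a') ∈ A ⊕ A' : q_S(a) = e₄(a')} be the pullback of A → A/S ← A'. Then there is an exact sequence of Λ-modules 0 → T → Y → X → A/S → 0. -/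
/-!
The rows `T ↪ B ↠ B/T` and `S ↪ A ↠ A/S` are replaced by arbitrary exact rows
`T →f B →q C` and `S →s A →p C'`. The map `Y → X` is `[(b, b')] ↦ (s (e₃ b'), e₂ (q b))`: both
coordinates vanish in `C'`, and the relations `(f t, e₁ t)` die because the columns are complexes.
The rest is a diagram chase: an element of `Y` killed by this map is, modulo the relations, of the
form `(f t, 0)`; an element `(a, a')` of `X` with `p a = 0` has `a ∈ range s` and
`a' ∈ range e₂`, hence lifts through the surjections `e₃` and `q`.
-/

namespace PushoutPullback

open LinearMap Function

variable {Λ : Type*} [Ring Λ] {T B C B' S A C' A' : Type*}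
  [AddCommGroup T] [Module Λ T] [AddCommGroup B] [Module Λ B] [AddCommGroup C] [Module Λ C]
  [AddCommGroup B'] [Module Λ B'] [AddCommGroup S] [Module Λ S] [AddCommGroup A] [Module Λ A]
  [AddCommGroup C'] [Module Λ C'] [AddCommGroup A'] [Module Λ A']
  (f : T →ₗ[Λ] B) (e₁ : T →ₗ[Λ] B') (p : A →ₗ[Λ] C') (e₄ : A' →ₗ[Λ] C')

abbrev pushoutRel : Submodule Λ (B × B') := range (f.prod e₁)

abbrev pullback : Submodule Λ (A × A') := ker (p ∘ₗ fst Λ A A' - e₄ ∘ₗ snd Λ A A')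

variable {f e₁ p e₄}

theorem mem_pullback {x : A × A'} : x ∈ pullback p e₄ ↔ p x.1 = e₄ x.2 := by
  simp [sub_eq_zero]

theorem injective_mkQ_comp_inl_comp (hf : Injective f) (he₁ : Injective e₁) :
    Injective ((pushoutRel f e₁).mkQ ∘ₗ inl Λ B B' ∘ₗ f) := by
  refine (injective_iff_map_eq_zero _).2 fun t ht => ?_
  obtain ⟨t', ht'⟩ := (Submodule.Quotient.mk_eq_zero _).1 ht
  have ht'_zero : t' = 0 := he₁ (by simpa using congrArg Prod.snd ht')
  exact hf (by simpa [ht'_zero] using (congrArg Prod.fst ht').symm)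

theorem surjective_comp_fst_comp_subtype (hp : Surjective p) (he₄ : Surjective e₄) :
    Surjective (p ∘ₗ fst Λ A A' ∘ₗ (pullback p e₄).subtype) := by
  intro c
  obtain ⟨a, rfl⟩ := hp c
  obtain ⟨a', ha'⟩ := he₄ (p a)
  exact ⟨⟨(a, a'), mem_pullback.2 ha'.symm⟩, rfl⟩

variable {q : B →ₗ[Λ] C} {s : S →ₗ[Λ] A} {e₃ : B' →ₗ[Λ] S} {e₂ : C →ₗ[Λ] A'}

variable (f e₁ p e₄ q s e₃ e₂) in
def pushoutToPullback (h₁₃ : e₃ ∘ₗ e₁ = 0) (hfq : q ∘ₗ f = 0) (hsp : p ∘ₗ s = 0)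
    (h₂₄ : e₄ ∘ₗ e₂ = 0) : (B × B') ⧸ pushoutRel f e₁ →ₗ[Λ] pullback p e₄ :=
  (pushoutRel f e₁).liftQ
    ((((s ∘ₗ e₃) ∘ₗ snd Λ B B').prod ((e₂ ∘ₗ q) ∘ₗ fst Λ B B')).codRestrict _ fun x => by
      rw [mem_pullback]
      simp [← comp_apply p s, ← comp_apply e₄ e₂, hsp, h₂₄])
    (by
      rintro _ ⟨t, rfl⟩
      ext
      · simp [← comp_apply e₃ e₁, h₁₃]
      · simp [← comp_apply q f, hfq])

@[simp]
theorem coe_pushoutToPullback_mk (h₁₃ : e₃ ∘ₗ e₁ = 0) (hfq : q ∘ₗ f = 0) (hsp : p ∘ₗ s = 0)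
    (h₂₄ : e₄ ∘ₗ e₂ = 0) (b : B) (b' : B') :
    (pushoutToPullback f e₁ p e₄ q s e₃ e₂ h₁₃ hfq hsp h₂₄ (Submodule.Quotient.mk (b, b')) :
      A × A') = (s (e₃ b'), e₂ (q b)) :=
  rfl

theorem exact_mkQ_comp_inl_comp_pushoutToPullback (hfq : Exact f q) (h₁₃ : Exact e₁ e₃)
    (hsp : p ∘ₗ s = 0) (h₂₄ : e₄ ∘ₗ e₂ = 0) (hs : Injective s) (he₂ : Injective e₂) :
    Exact ((pushoutRel f e₁).mkQ ∘ₗ inl Λ B B' ∘ₗ f)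
      (pushoutToPullback f e₁ p e₄ q s e₃ e₂ h₁₃.linearMap_comp_eq_zero
        hfq.linearMap_comp_eq_zero hsp h₂₄) := by
  refine exact_of_comp_of_mem_range (by ext t <;> simp [hfq.apply_apply_eq_zero]) fun y hy => ?_
  induction y using Submodule.Quotient.induction_on with | H x => ?_
  obtain ⟨b, b'⟩ := x
  rw [← Subtype.coe_inj, coe_pushoutToPullback_mk, ZeroMemClass.coe_zero, Prod.mk_eq_zero] at hy
  obtain ⟨t, rfl⟩ := (h₁₃ b').1 (hs (by rw [hy.1, map_zero]))
  obtain ⟨t₀, rfl⟩ := (hfq b).1 (he₂ (by rw [hy.2, map_zero]))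
  refine ⟨t₀ - t, (Submodule.Quotient.eq _).2 ⟨-t, ?_⟩⟩
  simp

theorem exact_pushoutToPullback_comp_fst_comp_subtype (hsp : Exact s p) (h₂₄ : Exact e₂ e₄)
    (h₁₃ : e₃ ∘ₗ e₁ = 0) (hfq : q ∘ₗ f = 0) (hq : Surjective q) (he₃ : Surjective e₃) :
    Exact (pushoutToPullback f e₁ p e₄ q s e₃ e₂ h₁₃ hfq hsp.linearMap_comp_eq_zero
        h₂₄.linearMap_comp_eq_zero)
      (p ∘ₗ fst Λ A A' ∘ₗ (pullback p e₄).subtype) := by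
  refine exact_of_comp_of_mem_range (by ext <;> simp [hsp.apply_apply_eq_zero]) ?_
  rintro ⟨⟨a, a'⟩, hx⟩ (ha : p a = 0)
  rw [mem_pullback] at hx
  obtain ⟨σ, rfl⟩ := (hsp a).1 ha
  obtain ⟨c, rfl⟩ := (h₂₄ a').1 (hx ▸ ha)
  obtain ⟨b, rfl⟩ := hq c
  obtain ⟨b', rfl⟩ := he₃ σ
  exact ⟨Submodule.Quotient.mk (b, b'), rfl⟩

end PushoutPullback

/-- Given submodules `T ≤ B`, `S ≤ A`, modules `B'`, `A'` and short
exact columns `0 → T → B' → S → 0` (via `e₁`, `e₃`) and `0 → B/T → A' → A/S → 0`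
(via `e₂`, `e₄`), form the pushout `Y = (B ⊕ B')/{(t, e₁ t)}` and the pullback
`X = {(a, a') : q_S a = e₄ a'}`.  Then there is an exact sequence of `Λ`-modules
`0 → T → Y → X → A/S → 0`, where `T → Y` is `t ↦ [(t, 0)]` and `X → A/S` is
`(a, a') ↦ q_S a`. -/
theorem stmt_4 (Λ : Type*) [Ring Λ] (A B B' A' : Type*)
    [AddCommGroup A] [Module Λ A] [AddCommGroup B] [Module Λ B]
    [AddCommGroup B'] [Module Λ B'] [AddCommGroup A'] [Module Λ A']
    (T : Submodule Λ B) (S : Submodule Λ A)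
    (e₁ : T →ₗ[Λ] B') (e₃ : B' →ₗ[Λ] S)
    (he₁ : Function.Injective e₁) (he₃ : Function.Surjective e₃)
    (hcol₁ : Function.Exact e₁ e₃)
    (e₂ : (B ⧸ T) →ₗ[Λ] A') (e₄ : A' →ₗ[Λ] (A ⧸ S))
    (he₂ : Function.Injective e₂) (he₄ : Function.Surjective e₄)
    (hcol₂ : Function.Exact e₂ e₄) :
    -- the pushout `Y` and the pullback `X`
    let D : Submodule Λ (B × B') := LinearMap.range ((T.subtype).prod e₁)
    let Y := (B × B') ⧸ D
    let X : Submodule Λ (A × A') :=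
      LinearMap.ker ((S.mkQ ∘ₗ LinearMap.fst Λ A A') - (e₄ ∘ₗ LinearMap.snd Λ A A'))
    let g₁ : T →ₗ[Λ] Y := D.mkQ ∘ₗ (LinearMap.inl Λ B B') ∘ₗ T.subtype
    let g₃ : X →ₗ[Λ] (A ⧸ S) := S.mkQ ∘ₗ (LinearMap.fst Λ A A') ∘ₗ X.subtype
    ∃ g₂ : Y →ₗ[Λ] X,
      Function.Injective g₁ ∧ Function.Surjective g₃ ∧
      Function.Exact g₁ g₂ ∧ Function.Exact g₂ g₃ := by
  intro D Y X g₁ g₃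
  have hrow₁ := LinearMap.exact_subtype_mkQ T
  have hrow₂ := LinearMap.exact_subtype_mkQ S
  exact ⟨PushoutPullback.pushoutToPullback _ _ _ _ _ _ _ _ hcol₁.linearMap_comp_eq_zero
      hrow₁.linearMap_comp_eq_zero hrow₂.linearMap_comp_eq_zero hcol₂.linearMap_comp_eq_zero,
    PushoutPullback.injective_mkQ_comp_inl_comp T.injective_subtype he₁,
    PushoutPullback.surjective_comp_fst_comp_subtype S.mkQ_surjective he₄,
    PushoutPullback.exact_mkQ_comp_inl_comp_pushoutToPullback hrow₁ hcol₁ _ _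
      S.injective_subtype he₂,
    PushoutPullback.exact_pushoutToPullback_comp_fst_comp_subtype hrow₂ hcol₂ _ _
      T.mkQ_surjective he₃⟩
end

section
/- Let Λ be a finite-dimensional algebra over a finite field k with |k| = q, and let A', B', λ be finite Λ-modules. Let h_λ^{α'β'} = |Ext¹_Λ(A', B')_λ| denote the number of elements of Ext¹_Λ(A', B') whose middle term is isomorphic to V_λ. If V_λ is not isomorphic to A' ⊕ B', then h_λ^{α'β'} ≡ 0 (mod q − 1). -/
set_option synthInstance.maxHeartbeats 1000000
set_option maxHeartbeats 1000000

/-- If a finite group `G` acts freely on a finite type `Y`, then `|G|` divides `|Y|`. -/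
theorem aux_free_action_card_dvd {G Y : Type*} [Group G] [Finite G] [Finite Y] [MulAction G Y]
    (h : ∀ (g : G) (y : Y), g • y = y → g = 1) : Nat.card G ∣ Nat.card Y := by
  classical
  have hstab : ∀ y : Y, MulAction.stabilizer G y = ⊥ := by
    intro y
    ext g
    simp only [MulAction.mem_stabilizer_iff, Subgroup.mem_bot]
    exact ⟨fun hg => h g y hg, fun hg => by simp [hg]⟩
  have e1 := MulAction.selfEquivSigmaOrbitsQuotientStabilizer G Y
  have e2 : ∀ ω : MulAction.orbitRel.Quotient G Y,
      (G ⧸ MulAction.stabilizer G ω.out) ≃ G := by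
    intro ω
    rw [hstab]
    exact QuotientGroup.quotientBot.toEquiv
  have e3 : Y ≃ (MulAction.orbitRel.Quotient G Y) × G :=
    (e1.trans (Equiv.sigmaCongrRight e2)).trans (Equiv.sigmaEquivProd _ _)
  rw [Nat.card_congr e3, Nat.card_prod]
  exact dvd_mul_left _ _

/-- The shear `(a, b) ↦ (a + f b, b)` as a linear automorphism of `A × B`. -/
def auxShear (k : Type*) {A B : Type*} [Field k] [AddCommGroup A] [Module k A]
    [AddCommGroup B] [Module k B] (f : B →ₗ[k] A) : (A × B) ≃ₗ[k] (A × B) :=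
  LinearEquiv.ofLinear
    (LinearMap.prod (LinearMap.fst k A B + f ∘ₗ LinearMap.snd k A B) (LinearMap.snd k A B))
    (LinearMap.prod (LinearMap.fst k A B - f ∘ₗ LinearMap.snd k A B) (LinearMap.snd k A B))
    (by ext x <;> simp) (by ext x <;> simp)

@[simp] theorem auxShear_apply (k : Type*) {A B : Type*} [Field k] [AddCommGroup A] [Module k A]
    [AddCommGroup B] [Module k B] (f : B →ₗ[k] A) (x : A × B) :
    auxShear k f x = (x.1 + f x.2, x.2) := rfl

/-- Let `Λ` be a finite-dimensional algebra over a finite field `k`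
with `|k| = q`, and let `A'`, `B'`, `X` be finite-dimensional `Λ`-modules (given by
`α`, `β`, `γ`).  Model `Ext¹_Λ(A', B')` as the quotient of the cocycle space
`Z(A',B')` by the coboundaries `T(A',B')`, and let `h = |Ext¹_Λ(A',B')_X|` be the
number of extension classes whose middle term `(B' ⊕ A')_δ` is isomorphic to `X`.
If `X` is not isomorphic to `B' ⊕ A'`, then `q − 1` divides `h`. -/
theorem stmt_13 (k Λ A B X : Type*) [Field k] [Fintype k] [Ring Λ] [Algebra k Λ]
    [AddCommGroup A] [Module k A] [AddCommGroup B] [Module k B]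
    [AddCommGroup X] [Module k X]
    [FiniteDimensional k Λ] [FiniteDimensional k A] [FiniteDimensional k B]
    [FiniteDimensional k X]
    (α : Λ →ₐ[k] Module.End k A) (β : Λ →ₐ[k] Module.End k B)
    (γ : Λ →ₐ[k] Module.End k X)
    (hX : ¬ ∃ e : (A × B) ≃ₗ[k] X, ∀ (l : Λ) (a : A) (b : B),
        e (α l a, β l b) = γ l (e (a, b))) :
    -- the coboundary subspace `T(B,A)`
    let Φ : (B →ₗ[k] A) →ₗ[k] (Λ → (B →ₗ[k] A)) :=
      LinearMap.pi (fun l => LinearMap.llcomp k B A A (α l) - LinearMap.lcomp k A (β l))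
    let T : Submodule k (Λ → (B →ₗ[k] A)) := LinearMap.range Φ
    -- the set of cocycles with middle term isomorphic to `X`
    let ZX : Set (Λ → (B →ₗ[k] A)) :=
      {δ | (∀ l m : Λ, δ (l * m) = α l ∘ₗ δ m + δ l ∘ₗ β m) ∧
        ∃ e : (A × B) ≃ₗ[k] X, ∀ (l : Λ) (a : A) (b : B),
          e (α l a + δ l b, β l b) = γ l (e (a, b))}
    -- `Ext¹(A',B')_X` is the image of `ZX` in `Z/T`
    (Fintype.card k - 1) ∣
      Nat.card ((fun δ => (Submodule.Quotient.mk δ : (Λ → (B →ₗ[k] A)) ⧸ T)) '' ZX) := by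
  intro Φ T ZX
  classical
  -- finiteness
  have hΛ : Finite Λ := Module.finite_of_finite k
  have hBA : Finite (B →ₗ[k] A) := Module.finite_of_finite k
  have hQ : Finite ((Λ → (B →ₗ[k] A)) ⧸ T) := Quotient.finite _
  -- no cocycle in ZX is a coboundary
  have hZT : ∀ δ ∈ ZX, δ ∉ T := by
    rintro δ ⟨-, e, he⟩ ⟨f, hf⟩
    apply hX
    refine ⟨(auxShear k (-f)).trans e, fun l a b => ?_⟩
    have hδ : ∀ (l : Λ) (b : B), δ l b = α l (f b) - f (β l b) := by
      intro l b
      rw [← hf]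
      simp [Φ]
    simp only [LinearEquiv.trans_apply, auxShear_apply, LinearMap.neg_apply]
    rw [← he l (a + -f b) b]
    refine congrArg e (Prod.ext ?_ rfl)
    simp only [map_add, map_neg, hδ l b]
    abel
  -- ZX is invariant under scaling by units
  have hscale : ∀ (t : kˣ) (δ : Λ → (B →ₗ[k] A)), δ ∈ ZX → (t : k) • δ ∈ ZX := by
    rintro t δ ⟨hc, e, he⟩
    refine ⟨fun l m => ?_, ((LinearEquiv.refl k A).prodCongr
      (DistribMulAction.toLinearEquiv k B t)).trans e, fun l a b => ?_⟩
    · simp only [Pi.smul_apply, hc l m, smul_add, LinearMap.comp_smul, LinearMap.smul_comp]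
    · have h1 : ∀ (x : A) (y : B),
          ((LinearEquiv.refl k A).prodCongr (DistribMulAction.toLinearEquiv k B t)) (x, y)
          = (x, (t : k) • y) := fun _ _ => rfl
      simp only [LinearEquiv.trans_apply, h1, Pi.smul_apply, LinearMap.smul_apply]
      rw [← (β l).map_smul, ← (δ l).map_smul]
      exact he l a ((t : k) • b)
  -- the set of classes as a `kˣ`-invariant subset of the quotient
  set S : SubMulAction kˣ ((Λ → (B →ₗ[k] A)) ⧸ T) :=
    { carrier := (fun δ => (Submodule.Quotient.mk δ : (Λ → (B →ₗ[k] A)) ⧸ T)) '' ZX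
      smul_mem' := by
        rintro t q ⟨δ, hδ, rfl⟩
        exact ⟨(t : k) • δ, hscale t δ hδ,
          by simp [Units.smul_def, Submodule.Quotient.mk_smul]⟩ } with hS
  haveI : MulAction kˣ S := SubMulAction.mulAction S
  -- the action of `kˣ` on `S` is free
  have hfree : ∀ (t : kˣ) (y : S), t • y = y → t = 1 := by
    rintro t ⟨q, δ, hδZ, rfl⟩ hty
    by_contra hne
    have h1 : Submodule.Quotient.mk ((t : k) • δ)
        = (Submodule.Quotient.mk δ : (Λ → (B →ₗ[k] A)) ⧸ T) := by
      have := congrArg Subtype.val hty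
      simpa [Units.smul_def, Submodule.Quotient.mk_smul] using this
    have h2 : ((t : k) - 1) • δ ∈ T := by
      rw [sub_smul, one_smul]
      exact (Submodule.Quotient.eq T).mp h1
    have hc : (t : k) - 1 ≠ 0 := sub_ne_zero.mpr (fun h => hne (Units.ext h))
    have h3 : δ ∈ T := by
      have := T.smul_mem ((t : k) - 1)⁻¹ h2
      rwa [inv_smul_smul₀ hc] at this
    exact hZT δ hδZ h3
  have hdvd : Nat.card kˣ ∣ Nat.card S :=
    @aux_free_action_card_dvd kˣ S _ _ _ (SubMulAction.mulAction S) hfree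
  have hcard : Nat.card kˣ = Fintype.card k - 1 := by
    rw [Nat.card_eq_fintype_card, Fintype.card_units]
  rw [← hcard]
  exact hdvd
end
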